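/- arXiv:2404.04865 — 3 statements merged into one kernel-verified Lean document; each statement's English description precedes it below -/
import Mathlib

section
/- Let 𝒟 be any domain space, H a hypothesis space, R a ranking function space, and define 𝒟' = {D^α : D_XY ∈ 𝒟, α ∈ [0,1)}, where D^α := (1−α)·D_I + α·D_O. Then: (1) 𝒟' is a prior-unknown domain space and 𝒟 ⊆ 𝒟'; (2) if 𝒟 is prior-unknown, then OOD detection is learnable under risk in 𝒟 for H if and only if it is strongly learnable under risk in 𝒟 for H; (3) OOD detection is strongly learnable under risk in 𝒟 for H if and only if it is learnable under risk in 𝒟' for H; (4) OOD detection is learnable under AUC in 𝒟 for R if and only if it is learnable under AUC in 𝒟' for R. -/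
open MeasureTheory Filter Set
open scoped ENNReal NNReal

noncomputable section

namespace OODF

/-- A *domain*: a mixture `(1-π)·D_I + π·D_O` of an ID joint distribution `D_I` on
`𝒳 × {1,…,K}` and an OOD joint distribution `D_O` on `𝒳 × {K+1}`, with class prior
`π ∈ [0,1)`.  Labels are encoded as naturals: ID labels are `{1,…,K}`, OOD label is `K+1`. -/
structure Domain (𝒳 : Type*) [MeasurableSpace 𝒳] (K : ℕ) where
  DI : Measure (𝒳 × ℕ)
  DO : Measure (𝒳 × ℕ)
  prior : ℝ
  probI : IsProbabilityMeasure DI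
  probO : IsProbabilityMeasure DO
  suppI : DI {p | p.2 ∉ Set.Icc 1 K} = 0
  suppO : DO {p | p.2 ≠ K + 1} = 0
  prior_mem : prior ∈ Set.Ico (0 : ℝ) 1

variable {𝒳 : Type*} [MeasurableSpace 𝒳] {K : ℕ}

namespace Domain

/-- the mixed joint distribution `D_XY = (1-π)·D_I + π·D_O` -/
def joint (D : Domain 𝒳 K) : Measure (𝒳 × ℕ) :=
  ENNReal.ofReal (1 - D.prior) • D.DI + ENNReal.ofReal D.prior • D.DO

/-- the marginal `D_{X_I}` of the ID joint distribution on the feature space -/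
def margI (D : Domain 𝒳 K) : Measure 𝒳 := D.DI.map Prod.fst

/-- the marginal `D_{X_O}` of the OOD joint distribution on the feature space -/
def margO (D : Domain 𝒳 K) : Measure 𝒳 := D.DO.map Prod.fst

/-- the domain `D^α = (1-α)·D_I + α·D_O`, i.e. `D` with its class prior replaced by `α` -/
def withPrior (D : Domain 𝒳 K) (α : Set.Ico (0 : ℝ) 1) : Domain 𝒳 K :=
  { D with prior := α.1, prior_mem := α.2 }

end Domain

/-- a prior-unknown domain space: closed under changing the class prior -/
def PriorUnknown (𝒟 : Set (Domain 𝒳 K)) : Prop :=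
  ∀ D ∈ 𝒟, ∀ α : Set.Ico (0 : ℝ) 1, D.withPrior α ∈ 𝒟

/-- the risk `R_D(h)` w.r.t. the mixed joint distribution -/
def risk (ℓ : ℕ → ℕ → ℝ) (D : Domain 𝒳 K) (h : 𝒳 → ℕ) : ℝ :=
  ∫ p, ℓ (h p.1) p.2 ∂D.joint

/-- the ID risk `R_D^in(h)` -/
def riskIn (ℓ : ℕ → ℕ → ℝ) (D : Domain 𝒳 K) (h : 𝒳 → ℕ) : ℝ :=
  ∫ p, ℓ (h p.1) p.2 ∂D.DI

/-- the OOD risk `R_D^out(h)` -/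
def riskOut (ℓ : ℕ → ℕ → ℝ) (D : Domain 𝒳 K) (h : 𝒳 → ℕ) : ℝ :=
  ∫ p, ℓ (h p.1) (K + 1) ∂D.DO

/-- the `α`-risk `R_D^α(h) = (1-α)·R_D^in(h) + α·R_D^out(h)` -/
def riskA (ℓ : ℕ → ℕ → ℝ) (D : Domain 𝒳 K) (h : 𝒳 → ℕ) (α : ℝ) : ℝ :=
  (1 - α) * riskIn ℓ D h + α * riskOut ℓ D h

/-- the distribution of an i.i.d. sample of size `n` from the ID joint distribution -/
def sampleMeasure (D : Domain 𝒳 K) (n : ℕ) : Measure (Fin n → 𝒳 × ℕ) :=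
  letI := D.probI
  Measure.pi fun _ => D.DI

/-- An algorithm maps, for every sample size `n ≥ 1`, a labeled sample to a function on `𝒳`. -/
abbrev Algorithm (𝒳 β : Type*) := (n : ℕ) → (Fin n → 𝒳 × ℕ) → (𝒳 → β)

/-- `A` is consistent w.r.t. `𝒟` under risk with rate `ε`: it outputs hypotheses in `H`,
the resulting risks are measurable in the sample, and the expected excess risk for samples
of size `n ≥ 1` is at most `ε n`. -/
def ConsistentRisk (ℓ : ℕ → ℕ → ℝ) (𝒟 : Set (Domain 𝒳 K)) (H : Set (𝒳 → ℕ))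
    (A : Algorithm 𝒳 ℕ) (ε : ℕ → ℝ) : Prop :=
  (∀ n : ℕ, 1 ≤ n → ∀ S, A n S ∈ H) ∧
  (∀ D ∈ 𝒟, ∀ n : ℕ, 1 ≤ n → Measurable fun S : Fin n → 𝒳 × ℕ => risk ℓ D (A n S)) ∧
  ∀ D ∈ 𝒟, ∀ n : ℕ, 1 ≤ n →
    ∫ S, (risk ℓ D (A n S) - ⨅ h : H, risk ℓ D h.1) ∂(sampleMeasure D n) ≤ ε n

/-- OOD detection is learnable under risk in `𝒟` for `H` with the given rate. -/
def LearnableRiskRate (ℓ : ℕ → ℕ → ℝ) (𝒟 : Set (Domain 𝒳 K)) (H : Set (𝒳 → ℕ))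
    (ε : ℕ → ℝ) : Prop :=
  ∃ A, ConsistentRisk ℓ 𝒟 H A ε

/-- learnability of OOD detection under risk -/
def LearnableRisk (ℓ : ℕ → ℕ → ℝ) (𝒟 : Set (Domain 𝒳 K)) (H : Set (𝒳 → ℕ)) : Prop :=
  ∃ ε : ℕ → ℝ, Antitone ε ∧ Tendsto ε atTop (nhds 0) ∧ LearnableRiskRate ℓ 𝒟 H ε

/-- `A` is strongly consistent: the expected excess `α`-risks are uniformly small over
all `α ∈ [0,1]`. -/
def StrongConsistentRisk (ℓ : ℕ → ℕ → ℝ) (𝒟 : Set (Domain 𝒳 K)) (H : Set (𝒳 → ℕ))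
    (A : Algorithm 𝒳 ℕ) (ε : ℕ → ℝ) : Prop :=
  (∀ n : ℕ, 1 ≤ n → ∀ S, A n S ∈ H) ∧
  (∀ D ∈ 𝒟, ∀ n : ℕ, 1 ≤ n → ∀ α : ℝ,
    Measurable fun S : Fin n → 𝒳 × ℕ => riskA ℓ D (A n S) α) ∧
  ∀ D ∈ 𝒟, ∀ n : ℕ, 1 ≤ n → ∀ α ∈ Set.Icc (0 : ℝ) 1,
    ∫ S, (riskA ℓ D (A n S) α - ⨅ h : H, riskA ℓ D h.1 α) ∂(sampleMeasure D n) ≤ ε n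

/-- strong learnability of OOD detection under risk -/
def StrongLearnableRisk (ℓ : ℕ → ℕ → ℝ) (𝒟 : Set (Domain 𝒳 K)) (H : Set (𝒳 → ℕ)) : Prop :=
  ∃ ε : ℕ → ℝ, Antitone ε ∧ Tendsto ε atTop (nhds 0) ∧
    ∃ A, StrongConsistentRisk ℓ 𝒟 H A ε

/-- the AUC of a ranking function `r` w.r.t. ID marginal `P` and OOD marginal `Q`:
`AUC(r) = E_{x ~ P} E_{x' ~ Q} [1_{r(x) > r(x')} + (1/2)·1_{r(x) = r(x')}]` -/
def AUC (r : 𝒳 → ℝ) (P Q : Measure 𝒳) : ℝ :=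
  ∫ x, (∫ x', ((if r x' < r x then (1 : ℝ) else 0) +
      (1 / 2) * (if r x = r x' then (1 : ℝ) else 0)) ∂Q) ∂P

/-- `A` is AUC-consistent w.r.t. `𝒟` with rate `ε`. -/
def ConsistentAUC (𝒟 : Set (Domain 𝒳 K)) (R : Set (𝒳 → ℝ))
    (A : Algorithm 𝒳 ℝ) (ε : ℕ → ℝ) : Prop :=
  (∀ n : ℕ, 1 ≤ n → ∀ S, A n S ∈ R) ∧
  (∀ D ∈ 𝒟, ∀ n : ℕ, 1 ≤ n →
    Measurable fun S : Fin n → 𝒳 × ℕ => AUC (A n S) D.margI D.margO) ∧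
  ∀ D ∈ 𝒟, ∀ n : ℕ, 1 ≤ n →
    ∫ S, ((⨆ r : R, AUC r.1 D.margI D.margO) - AUC (A n S) D.margI D.margO)
      ∂(sampleMeasure D n) ≤ ε n

/-- OOD detection is learnable under AUC in `𝒟` for `R` with the given rate. -/
def LearnableAUCRate (𝒟 : Set (Domain 𝒳 K)) (R : Set (𝒳 → ℝ)) (ε : ℕ → ℝ) : Prop :=
  ∃ A, ConsistentAUC 𝒟 R A ε

/-- learnability of OOD detection under AUC -/
def LearnableAUC (𝒟 : Set (Domain 𝒳 K)) (R : Set (𝒳 → ℝ)) : Prop :=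
  ∃ ε : ℕ → ℝ, Antitone ε ∧ Tendsto ε atTop (nhds 0) ∧ LearnableAUCRate 𝒟 R ε

/-- the (topological) support of a measure -/
def mSupport {α : Type*} [TopologicalSpace α] [MeasurableSpace α] (μ : Measure α) : Set α :=
  {x | ∀ U ∈ nhds x, 0 < μ U}

/-- the separate space `𝒟^s`: all domains whose ID and OOD marginals have disjoint supports -/
def separateSpace (𝒳 : Type*) [MeasurableSpace 𝒳] [TopologicalSpace 𝒳] (K : ℕ) :
    Set (Domain 𝒳 K) :=
  {D | mSupport D.margO ∩ mSupport D.margI = ∅}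

/-- a class `G` of binary functions (encoded as predicates) shatters the finite set `C` -/
def Shatters {α : Type*} (G : Set (α → Prop)) (C : Finset α) : Prop :=
  ∀ f : α → Prop, ∃ g ∈ G, ∀ x ∈ C, g x ↔ f x

/-- the VC dimension of a class of binary functions (encoded as predicates) -/
def VCdim {α : Type*} (G : Set (α → Prop)) : ℕ∞ :=
  sSup {n : ℕ∞ | ∃ C : Finset α, Shatters G C ∧ n = (C.card : ℕ∞)}

/-!
Changing the class prior of a domain changes neither `D_I`, `D_O` nor the sample distribution, and
turns the risk into the `α`-risk: `R_{D^α} = R_D^α`. Hence an algorithm is consistent on the prior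
closure `𝒟'` exactly when it is strongly consistent on `𝒟` for `α ∈ [0, 1)`; the endpoint `α = 1`
follows because the excess `α`-risk is `2B`-Lipschitz in `α` for a loss bounded by `B`. The AUC
only sees the marginals `D_{X_I}`, `D_{X_O}`, so it is blind to the prior altogether.
-/

instance (D : Domain 𝒳 K) : IsProbabilityMeasure D.DI := D.probI

instance (D : Domain 𝒳 K) : IsProbabilityMeasure D.DO := D.probO

instance (D : Domain 𝒳 K) (n : ℕ) : IsProbabilityMeasure (sampleMeasure D n) := by
  unfold sampleMeasure; infer_instance

namespace Domain

variable (D : Domain 𝒳 K)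

@[simp] lemma withPrior_prior : D.withPrior ⟨D.prior, D.prior_mem⟩ = D := rfl

@[simp] lemma margI_withPrior (α : Ico (0 : ℝ) 1) : (D.withPrior α).margI = D.margI := rfl

@[simp] lemma margO_withPrior (α : Ico (0 : ℝ) 1) : (D.withPrior α).margO = D.margO := rfl

lemma ae_label_mem_DI : ∀ᵐ p ∂D.DI, p.2 ∈ Icc 1 (K + 1) :=
  (ae_iff.2 D.suppI).mono fun _ hp => ⟨hp.1, hp.2.trans K.le_succ⟩

lemma ae_label_eq_DO : ∀ᵐ p ∂D.DO, p.2 = K + 1 := ae_iff.2 D.suppO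

lemma ae_label_mem_DO : ∀ᵐ p ∂D.DO, p.2 ∈ Icc 1 (K + 1) :=
  D.ae_label_eq_DO.mono fun _ hp => by simp [hp]

end Domain

@[simp] lemma sampleMeasure_withPrior (D : Domain 𝒳 K) (α : Ico (0 : ℝ) 1) (n : ℕ) :
    sampleMeasure (D.withPrior α) n = sampleMeasure D n := rfl

def priorClosure (𝒟 : Set (Domain 𝒳 K)) : Set (Domain 𝒳 K) :=
  {D' | ∃ D ∈ 𝒟, ∃ α : Ico (0 : ℝ) 1, D' = D.withPrior α}

section PriorClosure

variable {𝒟 : Set (Domain 𝒳 K)}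

lemma forall_mem_priorClosure {P : Domain 𝒳 K → Prop} :
    (∀ D' ∈ priorClosure 𝒟, P D') ↔ ∀ D ∈ 𝒟, ∀ α, P (D.withPrior α) := by
  constructor
  · exact fun h D hD α => h _ ⟨D, hD, α, rfl⟩
  · rintro h _ ⟨D, hD, α, rfl⟩
    exact h D hD α

lemma subset_priorClosure (𝒟 : Set (Domain 𝒳 K)) : 𝒟 ⊆ priorClosure 𝒟 :=
  fun D hD => ⟨D, hD, _, (D.withPrior_prior).symm⟩

lemma priorUnknown_priorClosure (𝒟 : Set (Domain 𝒳 K)) : PriorUnknown (priorClosure 𝒟) := by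
  rintro _ ⟨D, hD, -, rfl⟩ α
  exact ⟨D, hD, α, rfl⟩

lemma PriorUnknown.priorClosure_eq (h𝒟 : PriorUnknown 𝒟) : priorClosure 𝒟 = 𝒟 :=
  Subset.antisymm (forall_mem_priorClosure (P := (· ∈ 𝒟)) |>.2 h𝒟) (subset_priorClosure 𝒟)

end PriorClosure

section Risk

variable {ℓ : ℕ → ℕ → ℝ} {B : ℝ} {h : 𝒳 → ℕ} {μ : Measure (𝒳 × ℕ)}

lemma ae_norm_loss_le (hℓ : ∀ y₁ y₂, 0 ≤ ℓ y₁ y₂)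
    (hB : ∀ x, ∀ y ∈ Icc 1 (K + 1), ℓ (h x) y ≤ B) (hμ : ∀ᵐ p ∂μ, p.2 ∈ Icc 1 (K + 1)) :
    ∀ᵐ p ∂μ, ‖ℓ (h p.1) p.2‖ ≤ B :=
  hμ.mono fun p hp => by rw [Real.norm_of_nonneg (hℓ _ _)]; exact hB _ _ hp

lemma integrable_loss [IsFiniteMeasure μ] (hℓ : ∀ y₁ y₂, 0 ≤ ℓ y₁ y₂) (hm : Measurable h)
    (hB : ∀ x, ∀ y ∈ Icc 1 (K + 1), ℓ (h x) y ≤ B) (hμ : ∀ᵐ p ∂μ, p.2 ∈ Icc 1 (K + 1)) :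
    Integrable (fun p => ℓ (h p.1) p.2) μ :=
  have hmeas : Measurable fun p : 𝒳 × ℕ => ℓ (h p.1) p.2 :=
    (measurable_of_countable fun q : ℕ × ℕ => ℓ q.1 q.2).comp
      ((hm.comp measurable_fst).prodMk measurable_snd)
  (integrable_const B).mono' hmeas.aestronglyMeasurable (ae_norm_loss_le hℓ hB hμ)

lemma integral_loss_le [IsProbabilityMeasure μ] (hℓ : ∀ y₁ y₂, 0 ≤ ℓ y₁ y₂)
    (hB : ∀ x, ∀ y ∈ Icc 1 (K + 1), ℓ (h x) y ≤ B) (hμ : ∀ᵐ p ∂μ, p.2 ∈ Icc 1 (K + 1)) :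
    ∫ p, ℓ (h p.1) p.2 ∂μ ≤ B := by
  simpa using (le_abs_self _).trans (norm_integral_le_of_norm_le_const (ae_norm_loss_le hℓ hB hμ))

variable (D : Domain 𝒳 K)

lemma riskOut_eq_integral : riskOut ℓ D h = ∫ p, ℓ (h p.1) p.2 ∂D.DO :=
  integral_congr_ae <| D.ae_label_eq_DO.mono fun _ hp => by dsimp only; rw [hp]

lemma risk_eq_riskA_prior (hℓ : ∀ y₁ y₂, 0 ≤ ℓ y₁ y₂) (hm : Measurable h)
    (hB : ∀ x, ∀ y ∈ Icc 1 (K + 1), ℓ (h x) y ≤ B) :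
    risk ℓ D h = riskA ℓ D h D.prior := by
  have hI := integrable_loss hℓ hm hB D.ae_label_mem_DI
  have hO := integrable_loss hℓ hm hB D.ae_label_mem_DO
  rw [risk, Domain.joint, integral_add_measure (hI.smul_measure ENNReal.ofReal_ne_top)
      (hO.smul_measure ENNReal.ofReal_ne_top), integral_smul_measure, integral_smul_measure,
    ENNReal.toReal_ofReal (by linarith [D.prior_mem.2]), ENNReal.toReal_ofReal D.prior_mem.1,
    riskA, riskIn, riskOut_eq_integral, smul_eq_mul, smul_eq_mul]

lemma risk_withPrior (hℓ : ∀ y₁ y₂, 0 ≤ ℓ y₁ y₂) (hm : Measurable h)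
    (hB : ∀ x, ∀ y ∈ Icc 1 (K + 1), ℓ (h x) y ≤ B) (α : Ico (0 : ℝ) 1) :
    risk ℓ (D.withPrior α) h = riskA ℓ D h α :=
  risk_eq_riskA_prior (D.withPrior α) hℓ hm hB

lemma riskIn_nonneg (hℓ : ∀ y₁ y₂, 0 ≤ ℓ y₁ y₂) : 0 ≤ riskIn ℓ D h :=
  integral_nonneg fun _ => hℓ _ _

lemma riskOut_nonneg (hℓ : ∀ y₁ y₂, 0 ≤ ℓ y₁ y₂) : 0 ≤ riskOut ℓ D h :=
  integral_nonneg fun _ => hℓ _ _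

lemma riskIn_le (hℓ : ∀ y₁ y₂, 0 ≤ ℓ y₁ y₂) (hB : ∀ x, ∀ y ∈ Icc 1 (K + 1), ℓ (h x) y ≤ B) :
    riskIn ℓ D h ≤ B :=
  integral_loss_le hℓ hB D.ae_label_mem_DI

lemma riskOut_le (hℓ : ∀ y₁ y₂, 0 ≤ ℓ y₁ y₂) (hB : ∀ x, ∀ y ∈ Icc 1 (K + 1), ℓ (h x) y ≤ B) :
    riskOut ℓ D h ≤ B :=
  riskOut_eq_integral D ▸ integral_loss_le hℓ hB D.ae_label_mem_DO

lemma riskA_nonneg (hℓ : ∀ y₁ y₂, 0 ≤ ℓ y₁ y₂) {α : ℝ} (hα : α ∈ Icc (0 : ℝ) 1) :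
    0 ≤ riskA ℓ D h α :=
  add_nonneg (mul_nonneg (sub_nonneg.2 hα.2) (riskIn_nonneg D hℓ))
    (mul_nonneg hα.1 (riskOut_nonneg D hℓ))

lemma riskA_le (hℓ : ∀ y₁ y₂, 0 ≤ ℓ y₁ y₂) (hB : ∀ x, ∀ y ∈ Icc 1 (K + 1), ℓ (h x) y ≤ B)
    {α : ℝ} (hα : α ∈ Icc (0 : ℝ) 1) : riskA ℓ D h α ≤ B := by
  have hI := riskIn_le D hℓ hB
  have hO := riskOut_le D hℓ hB
  have hα₁ : 0 ≤ 1 - α := sub_nonneg.2 hα.2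
  calc riskA ℓ D h α ≤ (1 - α) * B + α * B := by unfold riskA; gcongr; exact hα.1
    _ = B := by ring

lemma abs_riskA_sub_riskA_le (hℓ : ∀ y₁ y₂, 0 ≤ ℓ y₁ y₂)
    (hB : ∀ x, ∀ y ∈ Icc 1 (K + 1), ℓ (h x) y ≤ B) (α β : ℝ) :
    |riskA ℓ D h α - riskA ℓ D h β| ≤ |α - β| * B := by
  have hsub : riskA ℓ D h α - riskA ℓ D h β = (α - β) * (riskOut ℓ D h - riskIn ℓ D h) := by
    unfold riskA; ring
  rw [hsub, abs_mul]
  exact mul_le_mul_of_nonneg_left (abs_sub_le_of_nonneg_of_le (riskOut_nonneg D hℓ)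
    (riskOut_le D hℓ hB) (riskIn_nonneg D hℓ) (riskIn_le D hℓ hB)) (abs_nonneg _)

-- `riskA` is affine in `α`, so it is determined by its values at two priors in `[0, 1)`.
lemma riskA_eq_of_zero_half (α : ℝ) :
    riskA ℓ D h α = (1 - 2 * α) * riskA ℓ D h 0 + 2 * α * riskA ℓ D h (1 / 2) := by
  unfold riskA; ring

end Risk

def excessRiskA (ℓ : ℕ → ℕ → ℝ) (D : Domain 𝒳 K) (H : Set (𝒳 → ℕ)) (h : 𝒳 → ℕ) (α : ℝ) : ℝ :=
  riskA ℓ D h α - ⨅ h' : H, riskA ℓ D h'.1 α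

section ExcessRisk

open Topology

variable {ℓ : ℕ → ℕ → ℝ} {B : ℝ} {D : Domain 𝒳 K} {H : Set (𝒳 → ℕ)} {h : 𝒳 → ℕ}

lemma bddBelow_range_riskA (hℓ : ∀ y₁ y₂, 0 ≤ ℓ y₁ y₂) {α : ℝ} (hα : α ∈ Icc (0 : ℝ) 1) :
    BddBelow (range fun h : H => riskA ℓ D h.1 α) :=
  ⟨0, by rintro _ ⟨h, rfl⟩; exact riskA_nonneg D hℓ hα⟩

lemma excessRiskA_nonneg (hℓ : ∀ y₁ y₂, 0 ≤ ℓ y₁ y₂) (hh : h ∈ H) {α : ℝ}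
    (hα : α ∈ Icc (0 : ℝ) 1) : 0 ≤ excessRiskA ℓ D H h α :=
  sub_nonneg.2 <| ciInf_le (bddBelow_range_riskA hℓ hα) ⟨h, hh⟩

lemma excessRiskA_le (hℓ : ∀ y₁ y₂, 0 ≤ ℓ y₁ y₂) (hB : ∀ x, ∀ y ∈ Icc 1 (K + 1), ℓ (h x) y ≤ B)
    {α : ℝ} (hα : α ∈ Icc (0 : ℝ) 1) : excessRiskA ℓ D H h α ≤ B :=
  (sub_le_self _ (Real.iInf_nonneg fun _ => riskA_nonneg D hℓ hα)).trans (riskA_le D hℓ hB hα)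

lemma excessRiskA_le_add (hℓ : ∀ y₁ y₂, 0 ≤ ℓ y₁ y₂)
    (hHB : ∀ h ∈ H, ∀ x, ∀ y ∈ Icc 1 (K + 1), ℓ (h x) y ≤ B) (hh : h ∈ H) (α : ℝ) {β : ℝ}
    (hβ : β ∈ Icc (0 : ℝ) 1) :
    excessRiskA ℓ D H h α ≤ excessRiskA ℓ D H h β + 2 * |α - β| * B := by
  have hLip : ∀ h' ∈ H, riskA ℓ D h' α ≤ riskA ℓ D h' β + |α - β| * B := fun h' hh' =>
    sub_le_iff_le_add'.1 ((le_abs_self _).trans (abs_riskA_sub_riskA_le D hℓ (hHB h' hh') α β))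
  have hLip' : ∀ h' ∈ H, riskA ℓ D h' β ≤ riskA ℓ D h' α + |α - β| * B := fun h' hh' =>
    sub_le_iff_le_add'.1 ((le_abs_self _).trans
      (abs_sub_comm α β ▸ abs_riskA_sub_riskA_le D hℓ (hHB h' hh') β α))
  have : Nonempty H := ⟨⟨h, hh⟩⟩
  have hinf : (⨅ h' : H, riskA ℓ D h'.1 β) - |α - β| * B ≤ ⨅ h' : H, riskA ℓ D h'.1 α :=
    le_ciInf fun h' => sub_le_iff_le_add.2 <|
      (ciInf_le (bddBelow_range_riskA hℓ hβ) h').trans (hLip' h'.1 h'.2)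
  unfold excessRiskA
  linarith [hLip h hh]

lemma integral_excessRiskA_one_le {Ω : Type*} [MeasurableSpace Ω] {μ : Measure Ω}
    [IsProbabilityMeasure μ] (hℓ : ∀ y₁ y₂, 0 ≤ ℓ y₁ y₂)
    (hHB : ∀ h ∈ H, ∀ x, ∀ y ∈ Icc 1 (K + 1), ℓ (h x) y ≤ B) {g : Ω → 𝒳 → ℕ}
    (hgH : ∀ ω, g ω ∈ H) (hgm : ∀ α, Measurable fun ω => riskA ℓ D (g ω) α) {c : ℝ}
    (hc : ∀ β ∈ Ico (0 : ℝ) 1, ∫ ω, excessRiskA ℓ D H (g ω) β ∂μ ≤ c) :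
    ∫ ω, excessRiskA ℓ D H (g ω) 1 ∂μ ≤ c := by
  have hint : ∀ β ∈ Icc (0 : ℝ) 1, Integrable (fun ω => excessRiskA ℓ D H (g ω) β) μ :=
    fun β hβ => (integrable_const B).mono' ((hgm β).sub measurable_const).aestronglyMeasurable <|
      ae_of_all _ fun ω => by
        rw [Real.norm_of_nonneg (excessRiskA_nonneg hℓ (hgH ω) hβ)]
        exact excessRiskA_le hℓ (hHB _ (hgH ω)) hβ
  have hlim : Tendsto (fun β : ℝ => c + 2 * |1 - β| * B) (𝓝[<] 1) (𝓝 c) := by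
    have hcont : Continuous fun β : ℝ => c + 2 * |1 - β| * B := by fun_prop
    simpa using (hcont.tendsto 1).mono_left nhdsWithin_le_nhds
  refine ge_of_tendsto hlim ?_
  filter_upwards [Ico_mem_nhdsLT one_pos] with β hβ
  have hβ' : β ∈ Icc (0 : ℝ) 1 := ⟨hβ.1, hβ.2.le⟩
  calc ∫ ω, excessRiskA ℓ D H (g ω) 1 ∂μ
      ≤ ∫ ω, (excessRiskA ℓ D H (g ω) β + 2 * |1 - β| * B) ∂μ :=
        integral_mono (hint 1 ⟨zero_le_one, le_rfl⟩) ((hint β hβ').add (integrable_const _))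
          fun ω => excessRiskA_le_add hℓ hHB (hgH ω) 1 hβ'
    _ = ∫ ω, excessRiskA ℓ D H (g ω) β ∂μ + 2 * |1 - β| * B := by
        rw [integral_add (hint β hβ') (integrable_const _), integral_const, probReal_univ,
          one_smul]
    _ ≤ c + 2 * |1 - β| * B := by gcongr; exact hc β hβ

end ExcessRisk

section Learnability

variable {ℓ : ℕ → ℕ → ℝ} {B : ℝ} {H : Set (𝒳 → ℕ)} {R : Set (𝒳 → ℝ)} {𝒟 : Set (Domain 𝒳 K)}

lemma risk_sub_iInf_withPrior (hℓ : ∀ y₁ y₂, 0 ≤ ℓ y₁ y₂) (hHm : ∀ h ∈ H, Measurable h)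
    (hHB : ∀ h ∈ H, ∀ x, ∀ y ∈ Icc 1 (K + 1), ℓ (h x) y ≤ B) (D : Domain 𝒳 K) {h : 𝒳 → ℕ}
    (hh : h ∈ H) (α : Ico (0 : ℝ) 1) :
    risk ℓ (D.withPrior α) h - ⨅ h' : H, risk ℓ (D.withPrior α) h'.1 = excessRiskA ℓ D H h α := by
  rw [risk_withPrior D hℓ (hHm h hh) (hHB h hh),
    iInf_congr fun h' : H => risk_withPrior D hℓ (hHm _ h'.2) (hHB _ h'.2) α]
  rfl

theorem strongConsistentRisk_iff_consistentRisk_priorClosure (hℓ : ∀ y₁ y₂, 0 ≤ ℓ y₁ y₂)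
    (hHm : ∀ h ∈ H, Measurable h) (hHB : ∀ h ∈ H, ∀ x, ∀ y ∈ Icc 1 (K + 1), ℓ (h x) y ≤ B)
    {A : Algorithm 𝒳 ℕ} {ε : ℕ → ℝ} :
    StrongConsistentRisk ℓ 𝒟 H A ε ↔ ConsistentRisk ℓ (priorClosure 𝒟) H A ε := by
  have hrisk : ∀ n, 1 ≤ n → (∀ S, A n S ∈ H) → ∀ (D : Domain 𝒳 K) (α : Ico (0 : ℝ) 1),
      (fun S => risk ℓ (D.withPrior α) (A n S)) = fun S => riskA ℓ D (A n S) α :=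
    fun n _ hA D α => funext fun S => risk_withPrior D hℓ (hHm _ (hA S)) (hHB _ (hA S)) α
  have hexcess : ∀ n, 1 ≤ n → (∀ S, A n S ∈ H) → ∀ (D : Domain 𝒳 K) (α : Ico (0 : ℝ) 1),
      (fun S => risk ℓ (D.withPrior α) (A n S) - ⨅ h : H, risk ℓ (D.withPrior α) h.1) =
        fun S => excessRiskA ℓ D H (A n S) α :=
    fun n _ hA D α => funext fun S => risk_sub_iInf_withPrior hℓ hHm hHB D (hA S) α
  constructor
  · rintro ⟨hA, hmeas, hexc⟩
    refine ⟨hA, forall_mem_priorClosure.2 fun D hD α n hn => ?_,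
      forall_mem_priorClosure.2 fun D hD α n hn => ?_⟩
    · rw [hrisk n hn (hA n hn)]
      exact hmeas D hD n hn α
    · rw [hexcess n hn (hA n hn)]
      exact hexc D hD n hn α ⟨α.2.1, α.2.2.le⟩
  · rintro ⟨hA, hmeas, hexc⟩
    have hmeasA : ∀ D ∈ 𝒟, ∀ n, 1 ≤ n → ∀ α : ℝ,
        Measurable fun S : Fin n → 𝒳 × ℕ => riskA ℓ D (A n S) α := by
      intro D hD n hn α
      have hmeas' : ∀ β : Ico (0 : ℝ) 1, Measurable fun S => riskA ℓ D (A n S) β := fun β => by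
        rw [← hrisk n hn (hA n hn)]
        exact hmeas _ ⟨D, hD, β, rfl⟩ n hn
      simp_rw [riskA_eq_of_zero_half D α]
      exact ((hmeas' ⟨0, le_rfl, one_pos⟩).const_mul _).add
        ((hmeas' ⟨1 / 2, by norm_num, by norm_num⟩).const_mul _)
    have hexcA : ∀ D ∈ 𝒟, ∀ n, 1 ≤ n → ∀ α ∈ Ico (0 : ℝ) 1,
        ∫ S, excessRiskA ℓ D H (A n S) α ∂sampleMeasure D n ≤ ε n := fun D hD n hn α hα => by
      rw [← hexcess n hn (hA n hn) D ⟨α, hα⟩]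
      exact hexc _ ⟨D, hD, ⟨α, hα⟩, rfl⟩ n hn
    refine ⟨hA, hmeasA, fun D hD n hn α hα => ?_⟩
    rcases hα.2.eq_or_lt with rfl | hlt
    · exact integral_excessRiskA_one_le hℓ hHB (hA n hn) (hmeasA D hD n hn) (hexcA D hD n hn)
    · exact hexcA D hD n hn α ⟨hα.1, hlt⟩

theorem strongLearnableRisk_iff_learnableRisk_priorClosure (hℓ : ∀ y₁ y₂, 0 ≤ ℓ y₁ y₂)
    (hHm : ∀ h ∈ H, Measurable h) (hHB : ∀ h ∈ H, ∀ x, ∀ y ∈ Icc 1 (K + 1), ℓ (h x) y ≤ B) :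
    StrongLearnableRisk ℓ 𝒟 H ↔ LearnableRisk ℓ (priorClosure 𝒟) H := by
  simp only [StrongLearnableRisk, LearnableRisk, LearnableRiskRate,
    strongConsistentRisk_iff_consistentRisk_priorClosure hℓ hHm hHB]

theorem consistentAUC_priorClosure_iff {A : Algorithm 𝒳 ℝ} {ε : ℕ → ℝ} :
    ConsistentAUC (priorClosure 𝒟) R A ε ↔ ConsistentAUC 𝒟 R A ε := by
  have : Nonempty (Ico (0 : ℝ) 1) := ⟨⟨0, le_rfl, one_pos⟩⟩
  simp only [ConsistentAUC, forall_mem_priorClosure, Domain.margI_withPrior,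
    Domain.margO_withPrior, sampleMeasure_withPrior, forall_const]

theorem learnableAUC_priorClosure_iff : LearnableAUC (priorClosure 𝒟) R ↔ LearnableAUC 𝒟 R := by
  simp only [LearnableAUC, LearnableAUCRate, consistentAUC_priorClosure_iff]

end Learnability

theorem stmt0_general {d K : ℕ} (X : Set (EuclideanSpace ℝ (Fin d)))
    (ℓ : ℕ → ℕ → ℝ)
    (hl_nonneg : ∀ y₁ y₂, 0 ≤ ℓ y₁ y₂)
    (hl_bdd : ∃ B, ∀ y₁ ∈ Set.Icc 1 (K + 1), ∀ y₂ ∈ Set.Icc 1 (K + 1), ℓ y₁ y₂ ≤ B)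
    (H : Set (↥X → ℕ)) (hH : ∀ h ∈ H, Measurable h ∧ ∀ x, h x ∈ Set.Icc 1 (K + 1))
    (R : Set (↥X → ℝ))
    (𝒟 𝒟' : Set (Domain ↥X K))
    (h𝒟' : 𝒟' = {D' | ∃ D ∈ 𝒟, ∃ α : Set.Ico (0 : ℝ) 1, D' = D.withPrior α}) :
    (PriorUnknown 𝒟' ∧ 𝒟 ⊆ 𝒟') ∧
    (PriorUnknown 𝒟 → (LearnableRisk ℓ 𝒟 H ↔ StrongLearnableRisk ℓ 𝒟 H)) ∧
    (StrongLearnableRisk ℓ 𝒟 H ↔ LearnableRisk ℓ 𝒟' H) ∧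
    (LearnableAUC 𝒟 R ↔ LearnableAUC 𝒟' R) := by
  obtain ⟨B, hB⟩ := hl_bdd
  obtain rfl : 𝒟' = priorClosure 𝒟 := h𝒟'
  have hrisk := strongLearnableRisk_iff_learnableRisk_priorClosure (𝒟 := 𝒟) hl_nonneg
    (fun h hh => (hH h hh).1) fun h hh x y hy => hB _ ((hH h hh).2 x) y hy
  refine ⟨⟨priorUnknown_priorClosure 𝒟, subset_priorClosure 𝒟⟩, fun h𝒟 => ?_, hrisk,
    learnableAUC_priorClosure_iff.symm⟩
  rw [hrisk, h𝒟.priorClosure_eq]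

/-- Theorem 1 of the paper.  Given any domain space `𝒟`, a hypothesis
space `H`, a ranking function space `R`, and `𝒟' = {D^α : D ∈ 𝒟, α ∈ [0,1)}`:
(1) `𝒟'` is prior-unknown and contains `𝒟`; (2) if `𝒟` is prior-unknown then
learnability and strong learnability under risk coincide on `𝒟`; (3) strong learnability
under risk on `𝒟` is equivalent to learnability under risk on `𝒟'`; (4) learnability
under AUC on `𝒟` is equivalent to learnability under AUC on `𝒟'`. -/
theorem stmt0 {d K : ℕ} (X : Set (EuclideanSpace ℝ (Fin d)))
    (ℓ : ℕ → ℕ → ℝ)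
    (hl_nonneg : ∀ y₁ y₂, 0 ≤ ℓ y₁ y₂)
    (hl_zero : ∀ y₁ ∈ Set.Icc 1 (K + 1), ∀ y₂ ∈ Set.Icc 1 (K + 1), (ℓ y₁ y₂ = 0 ↔ y₁ = y₂))
    (hl_bdd : ∃ B, ∀ y₁ ∈ Set.Icc 1 (K + 1), ∀ y₂ ∈ Set.Icc 1 (K + 1), ℓ y₁ y₂ ≤ B)
    (H : Set (↥X → ℕ)) (hH : ∀ h ∈ H, Measurable h ∧ ∀ x, h x ∈ Set.Icc 1 (K + 1))
    (R : Set (↥X → ℝ)) (hR : ∀ r ∈ R, Measurable r)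
    (𝒟 𝒟' : Set (Domain ↥X K))
    (h𝒟' : 𝒟' = {D' | ∃ D ∈ 𝒟, ∃ α : Set.Ico (0 : ℝ) 1, D' = D.withPrior α}) :
    (PriorUnknown 𝒟' ∧ 𝒟 ⊆ 𝒟') ∧
    (PriorUnknown 𝒟 → (LearnableRisk ℓ 𝒟 H ↔ StrongLearnableRisk ℓ 𝒟 H)) ∧
    (StrongLearnableRisk ℓ 𝒟 H ↔ LearnableRisk ℓ 𝒟' H) ∧
    (LearnableAUC 𝒟 R ↔ LearnableAUC 𝒟' R) :=
  stmt0_general X ℓ hl_nonneg hl_bdd H hH R 𝒟 𝒟' h𝒟'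

end OODF

end
end

section
/- Let D_XY be a domain and H a hypothesis space. Then inf_{h∈H} R_D^α(h) = (1−α)·inf_{h∈H} R_D^in(h) + α·inf_{h∈H} R_D^out(h) for every α ∈ [0,1) if and only if for every ε > 0 the intersection {h' ∈ H : R_D^in(h') ≤ inf_{h∈H} R_D^in(h) + 2ε} ∩ {h' ∈ H : R_D^out(h') ≤ inf_{h∈H} R_D^out(h) + 2ε} is nonempty. -/
open MeasureTheory Filter Set
open scoped ENNReal NNReal

noncomputable section

namespace OODF

variable {𝒳 : Type*} [MeasurableSpace 𝒳] {K : ℕ}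

/-- Lemma `Lemma1` in Appendix D of the paper.  For a domain `D` and a
hypothesis space `H`, the linear condition under risk holds for all `α ∈ [0,1)` iff for
every `ε > 0` there is a hypothesis in `H` that is simultaneously a `2ε`-minimizer of the
ID risk and of the OOD risk. -/
theorem stmt3 {d K : ℕ} (X : Set (EuclideanSpace ℝ (Fin d)))
    (ℓ : ℕ → ℕ → ℝ)
    (hl_nonneg : ∀ y₁ y₂, 0 ≤ ℓ y₁ y₂)
    (hl_zero : ∀ y₁ ∈ Set.Icc 1 (K + 1), ∀ y₂ ∈ Set.Icc 1 (K + 1), (ℓ y₁ y₂ = 0 ↔ y₁ = y₂))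
    (hl_bdd : ∃ B, ∀ y₁ ∈ Set.Icc 1 (K + 1), ∀ y₂ ∈ Set.Icc 1 (K + 1), ℓ y₁ y₂ ≤ B)
    (H : Set (↥X → ℕ)) (hHne : H.Nonempty)
    (hH : ∀ h ∈ H, Measurable h ∧ ∀ x, h x ∈ Set.Icc 1 (K + 1))
    (D : Domain ↥X K) :
    (∀ α ∈ Set.Ico (0 : ℝ) 1,
        (⨅ h : H, riskA ℓ D h.1 α)
          = (1 - α) * (⨅ h : H, riskIn ℓ D h.1) + α * (⨅ h : H, riskOut ℓ D h.1)) ↔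
      (∀ ε > (0 : ℝ), ∃ h' ∈ H,
        riskIn ℓ D h' ≤ (⨅ h : H, riskIn ℓ D h.1) + 2 * ε ∧
        riskOut ℓ D h' ≤ (⨅ h : H, riskOut ℓ D h.1) + 2 * ε) := by
  have : Nonempty H := hHne.to_subtype
  have hIn0 : ∀ h : H, 0 ≤ riskIn ℓ D h.1 := fun h =>
    integral_nonneg fun p => hl_nonneg _ _
  have hOut0 : ∀ h : H, 0 ≤ riskOut ℓ D h.1 := fun h =>
    integral_nonneg fun p => hl_nonneg _ _
  have hbIn : BddBelow (Set.range fun h : H => riskIn ℓ D h.1) :=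
    ⟨0, by rintro x ⟨h, rfl⟩; exact hIn0 h⟩
  have hbOut : BddBelow (Set.range fun h : H => riskOut ℓ D h.1) :=
    ⟨0, by rintro x ⟨h, rfl⟩; exact hOut0 h⟩
  set a := ⨅ h : H, riskIn ℓ D h.1 with ha
  set b := ⨅ h : H, riskOut ℓ D h.1 with hb
  have haLe : ∀ h : H, a ≤ riskIn ℓ D h.1 := fun h => ciInf_le hbIn h
  have hbLe : ∀ h : H, b ≤ riskOut ℓ D h.1 := fun h => ciInf_le hbOut h
  constructor
  · intro hlin ε hε
    have hhalf : (1 / 2 : ℝ) ∈ Set.Ico (0 : ℝ) 1 := by norm_num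
    have h1 := hlin (1 / 2) hhalf
    have hbA : BddBelow (Set.range fun h : H => riskA ℓ D h.1 (1 / 2)) := by
      refine ⟨0, ?_⟩
      rintro x ⟨h, rfl⟩
      exact add_nonneg (mul_nonneg (by norm_num) (hIn0 h))
        (mul_nonneg (by norm_num) (hOut0 h))
    have hlt : (⨅ h : H, riskA ℓ D h.1 (1 / 2)) <
        (⨅ h : H, riskA ℓ D h.1 (1 / 2)) + ε := lt_add_of_pos_right _ hε
    obtain ⟨h, hh⟩ := exists_lt_of_ciInf_lt hlt
    refine ⟨h.1, h.2, ?_, ?_⟩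
    · have := hbLe h
      have h2 : riskA ℓ D h.1 (1 / 2) < (1 - 1 / 2) * a + 1 / 2 * b + ε := by
        rw [← h1]; exact hh
      unfold riskA at h2; linarith
    · have := haLe h
      have h2 : riskA ℓ D h.1 (1 / 2) < (1 - 1 / 2) * a + 1 / 2 * b + ε := by
        rw [← h1]; exact hh
      unfold riskA at h2; linarith
  · intro hcond α hα
    obtain ⟨hα0, hα1⟩ := hα
    have hα1' : (0 : ℝ) ≤ 1 - α := by linarith
    have hbA : BddBelow (Set.range fun h : H => riskA ℓ D h.1 α) := by
      refine ⟨0, ?_⟩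
      rintro x ⟨h, rfl⟩
      exact add_nonneg (mul_nonneg hα1' (hIn0 h)) (mul_nonneg hα0 (hOut0 h))
    refine le_antisymm ?_ ?_
    · refine le_of_forall_pos_le_add fun ε hε => ?_
      obtain ⟨h', hh'H, hin, hout⟩ := hcond (ε / 2) (by linarith)
      have hle : riskA ℓ D h' α ≤ (1 - α) * a + α * b + ε := by
        unfold riskA
        have h1 : riskIn ℓ D h' ≤ a + ε := by linarith
        have h2 : riskOut ℓ D h' ≤ b + ε := by linarith
        nlinarith [mul_le_mul_of_nonneg_left h1 hα1',
          mul_le_mul_of_nonneg_left h2 hα0]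
      exact le_trans (ciInf_le hbA (⟨h', hh'H⟩ : H)) hle
    · refine le_ciInf fun h => ?_
      unfold riskA
      nlinarith [mul_le_mul_of_nonneg_left (haLe h) hα1',
        mul_le_mul_of_nonneg_left (hbLe h) hα0]

end OODF

end
end

section
/- Let R be a ranking function space and 𝒟 a domain space. If OOD detection is learnable under AUC in 𝒟 for R, then for any two domains D_XY = β·D_I + (1−β)·D_O and D_XY' = β'·D_I + (1−β')·D_O' in 𝒟 that share the same ID joint distribution D_I, the linear condition under AUC holds: for every α ∈ [0,1), α·sup_{r∈R} AUC(r; D_{X_I}, D_{X_O}) + (1−α)·sup_{r∈R} AUC(r; D_{X_I}, D_{X_O}') = sup_{r∈R} AUC(r; D_{X_I}, α·D_{X_O} + (1−α)·D_{X_O}'). -/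
open MeasureTheory Filter Set
open scoped ENNReal NNReal

noncomputable section

namespace OODF

variable {𝒳 : Type*} [MeasurableSpace 𝒳] {K : ℕ}

section AuxAUC

variable {𝒴 : Type*} [MeasurableSpace 𝒴]

/-- the AUC kernel -/
private def aucKer (r : 𝒴 → ℝ) (x x' : 𝒴) : ℝ :=
  (if r x' < r x then (1 : ℝ) else 0) + (1 / 2) * (if r x = r x' then (1 : ℝ) else 0)

private lemma AUC_eq (r : 𝒴 → ℝ) (P Q : Measure 𝒴) :
    AUC r P Q = ∫ x, (∫ x', aucKer r x x' ∂Q) ∂P := rfl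

omit [MeasurableSpace 𝒴] in
private lemma aucKer_abs_le (r : 𝒴 → ℝ) (x x' : 𝒴) : |aucKer r x x'| ≤ 3 / 2 := by
  unfold aucKer; split_ifs <;> rw [abs_le] <;> norm_num

private lemma aucKer_measurable {r : 𝒴 → ℝ} (hr : Measurable r) :
    Measurable fun p : 𝒴 × 𝒴 => aucKer r p.1 p.2 := by
  unfold aucKer
  apply Measurable.add
  · exact Measurable.ite (measurableSet_lt (hr.comp measurable_snd) (hr.comp measurable_fst))
      measurable_const measurable_const
  · exact (Measurable.ite (measurableSet_eq_fun (hr.comp measurable_fst)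
      (hr.comp measurable_snd)) measurable_const measurable_const).const_mul _

private lemma integrable_aucKer {r : 𝒴 → ℝ} (hr : Measurable r) (x : 𝒴)
    (Q : Measure 𝒴) [IsFiniteMeasure Q] : Integrable (fun x' => aucKer r x x') Q := by
  refine (integrable_const (3 / 2 : ℝ)).mono' ?_ ?_
  · exact ((aucKer_measurable hr).comp measurable_prodMk_left).aestronglyMeasurable
  · exact Filter.Eventually.of_forall fun x' => by
      simpa [Real.norm_eq_abs] using aucKer_abs_le r x x'

private lemma inner_abs_le (r : 𝒴 → ℝ) (x : 𝒴) (Q : Measure 𝒴) [IsProbabilityMeasure Q] :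
    |∫ x', aucKer r x x' ∂Q| ≤ 3 / 2 := by
  have := norm_integral_le_of_norm_le_const (μ := Q)
    (f := fun x' => aucKer r x x') (C := 3 / 2)
    (Filter.Eventually.of_forall fun x' => by
      simpa [Real.norm_eq_abs] using aucKer_abs_le r x x')
  simpa [Real.norm_eq_abs, measure_univ] using this

private lemma abs_AUC_le (r : 𝒴 → ℝ) (P Q : Measure 𝒴) [IsProbabilityMeasure P]
    [IsProbabilityMeasure Q] : |AUC r P Q| ≤ 3 / 2 := by
  rw [AUC_eq]
  have := norm_integral_le_of_norm_le_const (μ := P)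
    (f := fun x => ∫ x', aucKer r x x' ∂Q) (C := 3 / 2)
    (Filter.Eventually.of_forall fun x => by
      simpa [Real.norm_eq_abs] using inner_abs_le r x Q)
  simpa [Real.norm_eq_abs, measure_univ] using this

private lemma integrable_inner {r : 𝒴 → ℝ} (hr : Measurable r) (P Q : Measure 𝒴)
    [IsFiniteMeasure P] [IsProbabilityMeasure Q] :
    Integrable (fun x => ∫ x', aucKer r x x' ∂Q) P := by
  refine (integrable_const (3 / 2 : ℝ)).mono' ?_ ?_
  · exact ((aucKer_measurable hr).stronglyMeasurable.integral_prod_right').aestronglyMeasurable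
  · exact Filter.Eventually.of_forall fun x => by
      simpa [Real.norm_eq_abs] using inner_abs_le r x Q

private lemma AUC_mix {r : 𝒴 → ℝ} (hr : Measurable r) (P Q Q' : Measure 𝒴)
    [IsProbabilityMeasure P] [IsProbabilityMeasure Q] [IsProbabilityMeasure Q']
    {a b : ℝ} (ha : 0 ≤ a) (hb : 0 ≤ b) :
    AUC r P (ENNReal.ofReal a • Q + ENNReal.ofReal b • Q')
      = a * AUC r P Q + b * AUC r P Q' := by
  rw [AUC_eq, AUC_eq, AUC_eq]
  have hinner : ∀ x, ∫ x', aucKer r x x' ∂(ENNReal.ofReal a • Q + ENNReal.ofReal b • Q')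
      = a * ∫ x', aucKer r x x' ∂Q + b * ∫ x', aucKer r x x' ∂Q' := by
    intro x
    rw [integral_add_measure
        ((integrable_aucKer hr x Q).smul_measure ENNReal.ofReal_ne_top)
        ((integrable_aucKer hr x Q').smul_measure ENNReal.ofReal_ne_top),
      integral_smul_measure, integral_smul_measure,
      ENNReal.toReal_ofReal ha, ENNReal.toReal_ofReal hb, smul_eq_mul, smul_eq_mul]
  simp_rw [hinner]
  rw [integral_add ((integrable_inner hr P Q).const_mul a)
      ((integrable_inner hr P Q').const_mul b), integral_const_mul, integral_const_mul]

private lemma mix_prob (Q Q' : Measure 𝒴) [IsProbabilityMeasure Q] [IsProbabilityMeasure Q']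
    {a b : ℝ} (ha : 0 ≤ a) (hb : 0 ≤ b) (hab : a + b = 1) :
    IsProbabilityMeasure (ENNReal.ofReal a • Q + ENNReal.ofReal b • Q') := by
  constructor
  simp only [Measure.add_apply, Measure.smul_apply, measure_univ, smul_eq_mul, mul_one]
  rw [← ENNReal.ofReal_add ha hb, hab, ENNReal.ofReal_one]

end AuxAUC

/-- Theorem 5 / `T3_auc` of the paper.  If OOD detection is learnable
under AUC in `𝒟` for `R`, then for any two domains in `𝒟` sharing the same ID joint
distribution, the linear condition under AUC holds: for every `α ∈ [0,1)`,
`α·sup_{r∈R} AUC(r; D_{X_I}, D_{X_O}) + (1-α)·sup_{r∈R} AUC(r; D_{X_I}, D_{X_O}')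
  = sup_{r∈R} AUC(r; D_{X_I}, α·D_{X_O} + (1-α)·D_{X_O}')`. -/
theorem stmt6 {d K : ℕ} (X : Set (EuclideanSpace ℝ (Fin d)))
    (R : Set (↥X → ℝ)) (hR : ∀ r ∈ R, Measurable r)
    (𝒟 : Set (Domain ↥X K))
    (hLearn : LearnableAUC 𝒟 R) :
    ∀ D ∈ 𝒟, ∀ D' ∈ 𝒟, D.DI = D'.DI →
      ∀ α ∈ Set.Ico (0 : ℝ) 1,
        α * (⨆ r : R, AUC r.1 D.margI D.margO)
            + (1 - α) * (⨆ r : R, AUC r.1 D.margI D'.margO)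
          = ⨆ r : R, AUC r.1 D.margI
              (ENNReal.ofReal α • D.margO + ENNReal.ofReal (1 - α) • D'.margO) := by
  obtain ⟨ε, hmono, hlim, A, hmem, hmeas, hExp⟩ := hLearn
  intro D hD D' hD' hDI α hα
  obtain ⟨hα0, hα1⟩ := hα
  have hα1' : (0 : ℝ) ≤ 1 - α := by linarith
  -- probability instances
  haveI : IsProbabilityMeasure D.DI := D.probI
  haveI : IsProbabilityMeasure D.DO := D.probO
  haveI : IsProbabilityMeasure D'.DO := D'.probO
  haveI hPp : IsProbabilityMeasure D.margI :=
    Measure.isProbabilityMeasure_map measurable_fst.aemeasurable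
  haveI hQp : IsProbabilityMeasure D.margO :=
    Measure.isProbabilityMeasure_map measurable_fst.aemeasurable
  haveI hQ'p : IsProbabilityMeasure D'.margO :=
    Measure.isProbabilityMeasure_map measurable_fst.aemeasurable
  haveI hMp : IsProbabilityMeasure
      (ENNReal.ofReal α • D.margO + ENNReal.ofReal (1 - α) • D'.margO) :=
    mix_prob _ _ hα0 hα1' (by ring)
  have hP' : D'.margI = D.margI := by rw [Domain.margI, Domain.margI, hDI]
  rcases isEmpty_or_nonempty R with hE | hNE
  · simp [Real.iSup_of_isEmpty]
  -- bounded above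
  have hbdd : ∀ (Q : Measure ↥X), IsProbabilityMeasure Q →
      BddAbove (Set.range fun r : R => AUC r.1 D.margI Q) := by
    intro Q hQ
    refine ⟨3 / 2, ?_⟩
    rintro y ⟨r, rfl⟩
    exact le_of_abs_le (abs_AUC_le r.1 D.margI Q)
  have hbQ := hbdd D.margO hQp
  have hbQ' := hbdd D'.margO hQ'p
  have hbM := hbdd _ hMp
  set sD := ⨆ r : R, AUC r.1 D.margI D.margO with hsD
  set sD' := ⨆ r : R, AUC r.1 D.margI D'.margO with hsD'
  set sM := ⨆ r : R, AUC r.1 D.margI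
      (ENNReal.ofReal α • D.margO + ENNReal.ofReal (1 - α) • D'.margO) with hsM
  -- easy direction: sM ≤ α sD + (1-α) sD'
  have hle : sM ≤ α * sD + (1 - α) * sD' := by
    refine ciSup_le fun r => ?_
    rw [AUC_mix (hR r.1 r.2) _ _ _ hα0 hα1']
    exact add_le_add (mul_le_mul_of_nonneg_left (le_ciSup hbQ r) hα0)
      (mul_le_mul_of_nonneg_left (le_ciSup hbQ' r) hα1')
  -- hard direction via learnability
  have hge : α * sD + (1 - α) * sD' - sM ≤ 0 := by
    refine ge_of_tendsto hlim (Filter.eventually_atTop.2 ⟨1, fun n hn => ?_⟩)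
    set μ := sampleMeasure D n with hμ
    haveI hμp : IsProbabilityMeasure μ := by
      rw [hμ]; unfold sampleMeasure; infer_instance
    have hsm : sampleMeasure D' n = μ := by
      rw [hμ]; unfold sampleMeasure; rw [hDI]
    set f1 : (Fin n → ↥X × ℕ) → ℝ := fun S => sD - AUC (A n S) D.margI D.margO with hf1
    set f2 : (Fin n → ↥X × ℕ) → ℝ := fun S => sD' - AUC (A n S) D.margI D'.margO with hf2
    have h1 : ∫ S, f1 S ∂μ ≤ ε n := hExp D hD n hn
    have h2 : ∫ S, f2 S ∂μ ≤ ε n := by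
      have := hExp D' hD' n hn
      rwa [hsm, hP'] at this
    have hm1 : Measurable f1 := (measurable_const.sub (hmeas D hD n hn))
    have hm2 : Measurable f2 := by
      have := hmeas D' hD' n hn
      rw [hP'] at this
      exact measurable_const.sub this
    have hint : ∀ (f : (Fin n → ↥X × ℕ) → ℝ) (c : ℝ), Measurable f →
        (∀ S, |f S| ≤ c) → Integrable f μ := fun f c hf hb =>
      (integrable_const c).mono' hf.aestronglyMeasurable
        (Filter.Eventually.of_forall fun S => by simpa [Real.norm_eq_abs] using hb S)
    have hi1 : Integrable f1 μ := hint f1 (|sD| + 3 / 2) hm1 fun S => by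
      have := abs_AUC_le (A n S) D.margI D.margO
      rw [hf1]
      calc |sD - AUC (A n S) D.margI D.margO| ≤ |sD| + |AUC (A n S) D.margI D.margO| :=
            abs_sub _ _
        _ ≤ |sD| + 3 / 2 := by linarith
    have hi2 : Integrable f2 μ := hint f2 (|sD'| + 3 / 2) hm2 fun S => by
      have := abs_AUC_le (A n S) D.margI D'.margO
      rw [hf2]
      calc |sD' - AUC (A n S) D.margI D'.margO| ≤ |sD'| + |AUC (A n S) D.margI D'.margO| :=
            abs_sub _ _
        _ ≤ |sD'| + 3 / 2 := by linarith
    -- pointwise bound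
    have hpt : ∀ S, α * sD + (1 - α) * sD' - sM ≤ α * f1 S + (1 - α) * f2 S := by
      intro S
      have hmemS : A n S ∈ R := hmem n hn S
      have hub : AUC (A n S) D.margI
          (ENNReal.ofReal α • D.margO + ENNReal.ofReal (1 - α) • D'.margO) ≤ sM :=
        le_ciSup hbM ⟨A n S, hmemS⟩
      have hlin := AUC_mix (hR _ hmemS) D.margI D.margO D'.margO hα0 hα1'
      simp only [hf1, hf2]
      nlinarith [hlin, hub]
    have key : α * sD + (1 - α) * sD' - sM ≤ ∫ S, (α * f1 S + (1 - α) * f2 S) ∂μ := by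
      have := integral_mono (integrable_const (α * sD + (1 - α) * sD' - sM))
        ((hi1.const_mul α).add (hi2.const_mul (1 - α))) hpt
      simpa [integral_const, measure_univ] using this
    calc α * sD + (1 - α) * sD' - sM ≤ ∫ S, (α * f1 S + (1 - α) * f2 S) ∂μ := key
      _ = α * ∫ S, f1 S ∂μ + (1 - α) * ∫ S, f2 S ∂μ := by
          rw [integral_add (hi1.const_mul α) (hi2.const_mul (1 - α)),
            integral_const_mul, integral_const_mul]
      _ ≤ α * ε n + (1 - α) * ε n :=
          add_le_add (mul_le_mul_of_nonneg_left h1 hα0)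
            (mul_le_mul_of_nonneg_left h2 hα1')
      _ = ε n := by ring
  linarith

end OODF

end
end
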